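/- arXiv:2208.12240 — 8 statements merged into one kernel-verified Lean document; each statement's English description precedes it below -/
import Mathlib

section
/- Let $n, m$ be integers with $2 \le m \le n-1$, and let $(h_{pq})_{2 \le p,q \le n}$ be real numbers with $h_{pq} = h_{qp}$ for all $p, q$. Then $\mathcal{V}_1 \ge \frac{1}{2}\sum_{p=2}^{m} h_{pp}^2 + \sum_{q=m+1}^{n} h_{qq}^2 + \sum_{p=2}^{n-1}\sum_{q=p+1}^{n} h_{pq}^2 + \Big(\sum_{p=2}^{m} h_{pp}\Big) H - \frac{1}{2}\Big(\sum_{p=2}^{m} h_{pp}\Big)^2$. -/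
/- STATEMENT 0: For `2 ≤ m ≤ n-1` and a symmetric array `(h_{pq})_{2 ≤ p,q ≤ n}`,
`𝒱₁ = |h|² + ∑_{p=2}^m ∑_{q=p+1}^n (h_pp h_qq - h_pq²)` satisfies
`𝒱₁ ≥ ½∑_{p=2}^m h_pp² + ∑_{q=m+1}^n h_qq² + ∑_{p=2}^{n-1}∑_{q=p+1}^n h_pq²
      + (∑_{p=2}^m h_pp) H - ½(∑_{p=2}^m h_pp)²`. -/
lemma symm_double_sum (n : ℕ) (f : ℕ → ℕ → ℝ)
    (hsym : ∀ p ∈ Finset.Icc 2 n, ∀ q ∈ Finset.Icc 2 n, f p q = f q p) :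
    ∑ p ∈ Finset.Icc 2 n, ∑ q ∈ Finset.Icc 2 n, f p q
      = (∑ p ∈ Finset.Icc 2 n, f p p)
        + 2 * ∑ p ∈ Finset.Icc 2 n, ∑ q ∈ Finset.Icc (p + 1) n, f p q := by
  induction n with
  | zero => simp
  | succ k ih =>
    rcases lt_or_ge (k + 1) 2 with hk | hk
    · have he : Finset.Icc 2 (k + 1) = ∅ := Finset.Icc_eq_empty (by omega)
      simp [he]
    · have hins : Finset.Icc 2 (k + 1) = insert (k + 1) (Finset.Icc 2 k) := by
        ext x; simp [Finset.mem_Icc, Finset.mem_insert]; omega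
      have hnot : (k + 1) ∉ Finset.Icc 2 k := by simp [Finset.mem_Icc]
      have hsym' : ∀ p ∈ Finset.Icc 2 k, ∀ q ∈ Finset.Icc 2 k, f p q = f q p := by
        intro p hp q hq
        rw [Finset.mem_Icc] at hp hq
        exact hsym p (by rw [Finset.mem_Icc]; omega) q (by rw [Finset.mem_Icc]; omega)
      have hmem : ∀ x ∈ Finset.Icc 2 k, x ∈ Finset.Icc 2 (k+1) := by
        intro x hx; rw [Finset.mem_Icc] at hx ⊢; omega
      have hk1 : (k+1) ∈ Finset.Icc 2 (k+1) := by rw [Finset.mem_Icc]; omega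
      rw [hins, Finset.sum_insert hnot, Finset.sum_insert hnot, Finset.sum_insert hnot]
      have h1 : ∀ p ∈ Finset.Icc 2 k,
          ∑ q ∈ insert (k+1) (Finset.Icc 2 k), f p q
            = f p (k+1) + ∑ q ∈ Finset.Icc 2 k, f p q := fun p hp =>
        Finset.sum_insert hnot
      rw [Finset.sum_congr rfl h1, Finset.sum_add_distrib, ih hsym',
        Finset.sum_insert hnot]
      have h2 : ∀ p ∈ Finset.Icc 2 k,
          ∑ q ∈ Finset.Icc (p+1) (k+1), f p q
            = f p (k+1) + ∑ q ∈ Finset.Icc (p+1) k, f p q := by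
        intro p hp
        rw [Finset.mem_Icc] at hp
        have : Finset.Icc (p+1) (k+1) = insert (k+1) (Finset.Icc (p+1) k) := by
          ext x; simp [Finset.mem_Icc, Finset.mem_insert]; omega
        rw [this, Finset.sum_insert (by simp [Finset.mem_Icc])]
      rw [Finset.sum_congr rfl h2, Finset.sum_add_distrib]
      have h3 : Finset.Icc (k+1+1) (k+1) = ∅ := Finset.Icc_eq_empty (by omega)
      have h4 : ∑ q ∈ Finset.Icc 2 k, f (k+1) q = ∑ p ∈ Finset.Icc 2 k, f p (k+1) := by
        apply Finset.sum_congr rfl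
        intro q hq
        exact hsym (k+1) hk1 q (hmem q hq)
      rw [h3, h4]
      simp [Finset.sum_empty]
      ring

theorem stmt_0 (n m : ℕ) (hm : 2 ≤ m) (hmn : m + 1 ≤ n)
    (h : ℕ → ℕ → ℝ)
    (hsym : ∀ p ∈ Finset.Icc 2 n, ∀ q ∈ Finset.Icc 2 n, h p q = h q p) :
    (∑ p ∈ Finset.Icc 2 n, ∑ q ∈ Finset.Icc 2 n, (h p q) ^ 2)
      + ∑ p ∈ Finset.Icc 2 m, ∑ q ∈ Finset.Icc (p + 1) n,
          (h p p * h q q - (h p q) ^ 2)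
    ≥ (1 / 2) * (∑ p ∈ Finset.Icc 2 m, (h p p) ^ 2)
      + (∑ q ∈ Finset.Icc (m + 1) n, (h q q) ^ 2)
      + (∑ p ∈ Finset.Icc 2 (n - 1), ∑ q ∈ Finset.Icc (p + 1) n, (h p q) ^ 2)
      + (∑ p ∈ Finset.Icc 2 m, h p p) * (∑ p ∈ Finset.Icc 2 n, h p p)
      - (1 / 2) * (∑ p ∈ Finset.Icc 2 m, h p p) ^ 2 := by
  set A := ∑ p ∈ Finset.Icc 2 m, h p p with hA
  set B := ∑ p ∈ Finset.Icc (m+1) n, h p p with hB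
  set A2 := ∑ p ∈ Finset.Icc 2 m, (h p p)^2 with hA2
  set B2 := ∑ p ∈ Finset.Icc (m+1) n, (h p p)^2 with hB2
  set C := ∑ p ∈ Finset.Icc 2 n, ∑ q ∈ Finset.Icc (p + 1) n, (h p q)^2 with hC
  set D := ∑ p ∈ Finset.Icc 2 m, ∑ q ∈ Finset.Icc (p + 1) n, (h p q)^2 with hD
  -- split Icc 2 n = Icc 2 m ∪ Icc (m+1) n
  have hsplit : Finset.Icc 2 n = Finset.Icc 2 m ∪ Finset.Icc (m+1) n := by
    ext x; simp [Finset.mem_Icc, Finset.mem_union]; omega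
  have hdisj : Disjoint (Finset.Icc 2 m) (Finset.Icc (m+1) n) := by
    rw [Finset.disjoint_left]; intro x hx hx'
    rw [Finset.mem_Icc] at hx hx'; omega
  -- H = A + B
  have hH : ∑ p ∈ Finset.Icc 2 n, h p p = A + B := by
    rw [hsplit, Finset.sum_union hdisj]
  -- diag squares
  have hdiag : ∑ p ∈ Finset.Icc 2 n, (h p p)^2 = A2 + B2 := by
    rw [hsplit, Finset.sum_union hdisj]
  -- total square sum
  have hT : ∑ p ∈ Finset.Icc 2 n, ∑ q ∈ Finset.Icc 2 n, (h p q)^2 = A2 + B2 + 2 * C := by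
    rw [symm_double_sum n (fun p q => (h p q)^2) (fun p hp q hq => by rw [hsym p hp q hq]),
      hdiag]
  -- C over Icc 2 (n-1) equals C
  have hC' : ∑ p ∈ Finset.Icc 2 (n-1), ∑ q ∈ Finset.Icc (p + 1) n, (h p q)^2 = C := by
    apply Finset.sum_subset
    · apply Finset.Icc_subset_Icc_right; omega
    · intro x hx hx'
      rw [Finset.mem_Icc] at hx hx'
      have : x = n := by omega
      subst this
      rw [Finset.Icc_eq_empty (by omega), Finset.sum_empty]
  -- the cross-term sum
  have hP : ∑ p ∈ Finset.Icc 2 m, ∑ q ∈ Finset.Icc (p + 1) n, h p p * h q q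
      = (A^2 - A2) / 2 + A * B := by
    have hinner : ∀ p ∈ Finset.Icc 2 m,
        ∑ q ∈ Finset.Icc (p + 1) n, h p p * h q q
          = (∑ q ∈ Finset.Icc (p+1) m, h p p * h q q) + h p p * B := by
      intro p hp
      rw [Finset.mem_Icc] at hp
      have hsp : Finset.Icc (p+1) n = Finset.Icc (p+1) m ∪ Finset.Icc (m+1) n := by
        ext x; simp [Finset.mem_Icc, Finset.mem_union]; omega
      have hdj : Disjoint (Finset.Icc (p+1) m) (Finset.Icc (m+1) n) := by
        rw [Finset.disjoint_left]; intro x hx hx'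
        rw [Finset.mem_Icc] at hx hx'; omega
      rw [hsp, Finset.sum_union hdj, Finset.mul_sum]
    rw [Finset.sum_congr rfl hinner, Finset.sum_add_distrib, ← Finset.sum_mul]
    have hkey : ∑ p ∈ Finset.Icc 2 m, ∑ q ∈ Finset.Icc (p+1) m, h p p * h q q
        = (A^2 - A2) / 2 := by
      have := symm_double_sum m (fun p q => h p p * h q q)
        (fun p _ q _ => by ring)
      rw [show (∑ p ∈ Finset.Icc 2 m, ∑ q ∈ Finset.Icc 2 m, h p p * h q q) = A * A by
        rw [hA, Finset.sum_mul_sum],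
        show (∑ p ∈ Finset.Icc 2 m, h p p * h p p) = A2 by
          rw [hA2]; apply Finset.sum_congr rfl; intro p _; ring] at this
      linarith
    rw [hkey]
  have hPD : ∑ p ∈ Finset.Icc 2 m, ∑ q ∈ Finset.Icc (p + 1) n,
      (h p p * h q q - (h p q)^2) = (A^2 - A2)/2 + A * B - D := by
    have : ∀ p ∈ Finset.Icc 2 m, ∑ q ∈ Finset.Icc (p + 1) n,
        (h p p * h q q - (h p q)^2)
          = (∑ q ∈ Finset.Icc (p + 1) n, h p p * h q q)
            - ∑ q ∈ Finset.Icc (p + 1) n, (h p q)^2 := by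
      intro p _; rw [Finset.sum_sub_distrib]
    rw [Finset.sum_congr rfl this, Finset.sum_sub_distrib, hP, hD]
  -- C = D + E with E ≥ 0
  have hCD : D ≤ C := by
    rw [hC, hD]
    apply Finset.sum_le_sum_of_subset_of_nonneg
    · apply Finset.Icc_subset_Icc_right; omega
    · intro i _ _
      exact Finset.sum_nonneg fun q _ => sq_nonneg _
  rw [hT, hPD, hH, hC']
  nlinarith [hCD]
end

section
/- Let $n, m$ be integers with $2 \le m \le n-1$, and let $(h_{pq})_{2 \le p,q \le n}$ be real numbers with $h_{pq} = h_{qp}$ for all $p, q$. If the trace vanishes, i.e. $H = \sum_{p=2}^{n} h_{pp} = 0$, then $\mathcal{V}_1 \ge \frac{m^2 - 2 - n(m-2)}{2(m-1)(n-m)} \Big(\sum_{p=2}^{m} h_{pp}\Big)^2$. -/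
open Finset

lemma pair_sum (s : Finset ℕ) (f : ℕ → ℝ) :
    2 * (∑ p ∈ s, ∑ q ∈ s.filter (p < ·), f p * f q)
      = (∑ p ∈ s, f p) ^ 2 - ∑ p ∈ s, (f p) ^ 2 := by
  have hswap : ∑ p ∈ s, ∑ q ∈ s.filter (· < p), f p * f q
      = ∑ p ∈ s, ∑ q ∈ s.filter (p < ·), f p * f q := by
    rw [Finset.sum_comm' (s' := fun q => s.filter (q < ·)) (t' := s)
      (by intro x y; simp only [mem_filter]; tauto)]
    exact Finset.sum_congr rfl fun p _ => Finset.sum_congr rfl fun q _ => mul_comm _ _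
  have hsq : (∑ p ∈ s, f p) ^ 2 = ∑ p ∈ s, ∑ q ∈ s, f p * f q := by
    rw [sq, Finset.sum_mul_sum]
  have hdecomp : ∀ p ∈ s, ∑ q ∈ s, f p * f q
      = (∑ q ∈ s.filter (· < p), f p * f q) + f p ^ 2
        + ∑ q ∈ s.filter (p < ·), f p * f q := by
    intro p hp
    have hu : s = s.filter (· < p) ∪ (s.filter (· = p) ∪ s.filter (p < ·)) := by
      rw [← Finset.filter_or, ← Finset.filter_or, Finset.filter_true_of_mem]
      intro x _; omega
    have hone : s.filter (· = p) = {p} := by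
      ext x
      simp only [mem_filter, mem_singleton]
      constructor
      · rintro ⟨_, rfl⟩; rfl
      · rintro rfl; exact ⟨hp, rfl⟩
    have d1 : Disjoint (s.filter (· = p)) (s.filter (p < ·)) := by
      rw [Finset.disjoint_left]; intro x hx hy
      simp only [mem_filter] at hx hy; omega
    have d2 : Disjoint (s.filter (· < p)) (s.filter (· = p) ∪ s.filter (p < ·)) := by
      rw [Finset.disjoint_left]; intro x hx hy
      simp only [mem_filter, mem_union] at hx hy; omega
    calc ∑ q ∈ s, f p * f q
        = ∑ q ∈ s.filter (· < p) ∪ (s.filter (· = p) ∪ s.filter (p < ·)), f p * f q := by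
          rw [← hu]
      _ = _ := by
          rw [Finset.sum_union d2, Finset.sum_union d1, hone, Finset.sum_singleton, ← sq]
          ring
  rw [hsq, Finset.sum_congr rfl hdecomp, Finset.sum_add_distrib, Finset.sum_add_distrib, hswap]
  ring

/- STATEMENT 1: For `2 ≤ m ≤ n-1` and a symmetric array `(h_{pq})_{2 ≤ p,q ≤ n}` with
vanishing trace `H = ∑_{p=2}^n h_pp = 0`, one has
`𝒱₁ ≥ (m² - 2 - n(m-2)) / (2(m-1)(n-m)) · (∑_{p=2}^m h_pp)²`. -/
theorem stmt_1 (n m : ℕ) (hm : 2 ≤ m) (hmn : m + 1 ≤ n)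
    (h : ℕ → ℕ → ℝ)
    (hsym : ∀ p ∈ Finset.Icc 2 n, ∀ q ∈ Finset.Icc 2 n, h p q = h q p)
    (hH : ∑ p ∈ Finset.Icc 2 n, h p p = 0) :
    (∑ p ∈ Finset.Icc 2 n, ∑ q ∈ Finset.Icc 2 n, (h p q) ^ 2)
      + ∑ p ∈ Finset.Icc 2 m, ∑ q ∈ Finset.Icc (p + 1) n,
          (h p p * h q q - (h p q) ^ 2)
    ≥ ((m : ℝ) ^ 2 - 2 - (n : ℝ) * ((m : ℝ) - 2))
        / (2 * ((m : ℝ) - 1) * ((n : ℝ) - (m : ℝ)))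
        * (∑ p ∈ Finset.Icc 2 m, h p p) ^ 2 := by
  set A := Finset.Icc 2 m with hA
  set B := Finset.Icc (m+1) n with hB
  have hIAB : Finset.Icc 2 n = A ∪ B := by
    ext x; simp only [hA, hB, mem_Icc, mem_union]; omega
  have dAB : Disjoint A B := by
    rw [Finset.disjoint_left]; intro x hx hy
    simp only [hA, hB, mem_Icc] at hx hy; omega
  set a := ∑ p ∈ A, h p p with ha
  set S1 := ∑ p ∈ A, (h p p)^2 with hS1
  set S2 := ∑ p ∈ B, (h p p)^2 with hS2
  have hb : ∑ p ∈ B, h p p = -a := by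
    rw [hIAB, Finset.sum_union dAB] at hH; linarith
  -- cardinalities
  have cardA : (#A : ℝ) = (m : ℝ) - 1 := by
    rw [hA, Nat.card_Icc]
    have : m + 1 - 2 = m - 1 := by omega
    rw [this, Nat.cast_sub (by omega)]; norm_num
  have cardB : (#B : ℝ) = (n : ℝ) - (m : ℝ) := by
    rw [hB, Nat.card_Icc]
    have : n + 1 - (m + 1) = n - m := by omega
    rw [this, Nat.cast_sub (by omega)]
  -- Cauchy-Schwarz
  have cauchy1 : a ^ 2 ≤ ((m : ℝ) - 1) * S1 := by
    rw [← cardA]; exact sq_sum_le_card_mul_sum_sq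
  have cauchy2 : a ^ 2 ≤ ((n : ℝ) - (m : ℝ)) * S2 := by
    have := sq_sum_le_card_mul_sum_sq (s := B) (f := fun p => h p p)
    rw [hb, cardB] at this
    simpa using this
  -- Step 1: square sums
  have key1 : ∑ p ∈ Finset.Icc 2 n, ∑ q ∈ Finset.Icc 2 n, (h p q) ^ 2
      ≥ (S1 + S2) + ∑ p ∈ A, ∑ q ∈ Finset.Icc (p + 1) n, (h p q) ^ 2 := by
    rw [hIAB, Finset.sum_union dAB]
    have part1 : ∑ p ∈ A, ∑ q ∈ A ∪ B, (h p q) ^ 2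
        ≥ S1 + ∑ p ∈ A, ∑ q ∈ Finset.Icc (p + 1) n, (h p q) ^ 2 := by
      have hrw : S1 + ∑ p ∈ A, ∑ q ∈ Finset.Icc (p + 1) n, (h p q) ^ 2
          = ∑ p ∈ A, ((h p p)^2 + ∑ q ∈ Finset.Icc (p + 1) n, (h p q) ^ 2) := by
        rw [hS1, Finset.sum_add_distrib]
      rw [ge_iff_le, hrw]
      apply Finset.sum_le_sum
      intro p hp
      have hp' : 2 ≤ p ∧ p ≤ m := by simpa [hA, mem_Icc] using hp
      have hnot : p ∉ Finset.Icc (p+1) n := by simp [mem_Icc]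
      have hsub : insert p (Finset.Icc (p+1) n) ⊆ A ∪ B := by
        intro q hq
        rw [← hIAB]
        simp only [Finset.mem_insert, mem_Icc] at hq ⊢
        omega
      calc (h p p)^2 + ∑ q ∈ Finset.Icc (p + 1) n, (h p q) ^ 2
          = ∑ q ∈ insert p (Finset.Icc (p+1) n), (h p q) ^ 2 := by
            rw [Finset.sum_insert hnot]
        _ ≤ _ := Finset.sum_le_sum_of_subset_of_nonneg hsub (fun i _ _ => sq_nonneg _)
    have part2 : ∑ p ∈ B, ∑ q ∈ A ∪ B, (h p q) ^ 2 ≥ S2 := by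
      rw [ge_iff_le, hS2]
      apply Finset.sum_le_sum
      intro p hp
      have hpI : p ∈ A ∪ B := Finset.mem_union_right _ hp
      exact Finset.single_le_sum (f := fun q => (h p q)^2) (fun q _ => sq_nonneg _) hpI
    linarith
  -- Step 2: product sums
  set X := ∑ p ∈ A, ∑ q ∈ Finset.Icc (p+1) m, h p p * h q q with hX
  have hXval : 2 * X = a ^ 2 - S1 := by
    have := pair_sum A (fun p => h p p)
    rw [← ha, ← hS1] at this
    rw [hX, ← this]
    congr 1
    apply Finset.sum_congr rfl
    intro p hp
    have hp' : 2 ≤ p ∧ p ≤ m := by simpa [hA, mem_Icc] using hp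
    congr 1
    ext q; simp only [hA, mem_filter, mem_Icc]; omega
  have key2 : ∑ p ∈ A, ∑ q ∈ Finset.Icc (p + 1) n, h p p * h q q
      = X + a * (-a) := by
    rw [← hb, hX, ha, Finset.sum_mul, ← Finset.sum_add_distrib]
    apply Finset.sum_congr rfl
    intro p hp
    have hp' : 2 ≤ p ∧ p ≤ m := by simpa [hA, mem_Icc] using hp
    have hu : Finset.Icc (p+1) n = Finset.Icc (p+1) m ∪ B := by
      ext q; simp only [hB, mem_Icc, mem_union]; omega
    have hd : Disjoint (Finset.Icc (p+1) m) B := by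
      rw [Finset.disjoint_left]; intro x hx hy
      simp only [hB, mem_Icc] at hx hy; omega
    rw [hu, Finset.sum_union hd, Finset.mul_sum]
  -- combine
  have expand : ∑ p ∈ A, ∑ q ∈ Finset.Icc (p + 1) n,
      (h p p * h q q - (h p q) ^ 2)
      = (∑ p ∈ A, ∑ q ∈ Finset.Icc (p + 1) n, h p p * h q q)
        - ∑ p ∈ A, ∑ q ∈ Finset.Icc (p + 1) n, (h p q) ^ 2 := by
    simp [Finset.sum_sub_distrib]
  rw [ge_iff_le, div_mul_eq_mul_div, div_le_iff₀ (by
    have h1 : (1:ℝ) ≤ (m:ℝ) - 1 := by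
      have : (2:ℝ) ≤ (m:ℝ) := by exact_mod_cast hm
      linarith
    have h2 : (1:ℝ) ≤ (n:ℝ) - (m:ℝ) := by
      have : (m:ℝ) + 1 ≤ (n:ℝ) := by exact_mod_cast hmn
      linarith
    positivity)]
  rw [expand, key2]
  have h1 : (1:ℝ) ≤ (m:ℝ) - 1 := by
    have : (2:ℝ) ≤ (m:ℝ) := by exact_mod_cast hm
    linarith
  have h2 : (1:ℝ) ≤ (n:ℝ) - (m:ℝ) := by
    have : (m:ℝ) + 1 ≤ (n:ℝ) := by exact_mod_cast hmn
    linarith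
  have step : ∑ p ∈ Finset.Icc 2 n, ∑ q ∈ Finset.Icc 2 n, (h p q) ^ 2
      + (X + a * -a - ∑ p ∈ A, ∑ q ∈ Finset.Icc (p + 1) n, (h p q) ^ 2)
      ≥ S1/2 + S2 - a^2/2 := by linarith [key1, hXval]
  have hpos : (0:ℝ) ≤ 2 * ((m:ℝ) - 1) * ((n:ℝ) - (m:ℝ)) := by positivity
  calc ((m:ℝ) ^ 2 - 2 - (n:ℝ) * ((m:ℝ) - 2)) * a ^ 2
      ≤ (S1/2 + S2 - a^2/2) * (2 * ((m:ℝ) - 1) * ((n:ℝ) - (m:ℝ))) := by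
        nlinarith [mul_nonneg (by linarith : (0:ℝ) ≤ (n:ℝ)-(m:ℝ)) (by linarith : (0:ℝ) ≤ ((m:ℝ)-1)*S1 - a^2),
          mul_nonneg (by linarith : (0:ℝ) ≤ (m:ℝ)-1) (by linarith : (0:ℝ) ≤ ((n:ℝ)-(m:ℝ))*S2 - a^2)]
    _ ≤ _ := mul_le_mul_of_nonneg_right step hpos
end

section
/- Let $n, m$ be integers with $2 \le m \le n-1$ and $n(m-2) < m^2 - 2$, and let $(h_{pq})_{2 \le p,q \le n}$ be real numbers with $h_{pq} = h_{qp}$ for all $p, q$. If $H = \sum_{p=2}^{n} h_{pp} = 0$ and $\mathcal{V}_1 \le 0$, then $h_{pq} = 0$ for all $2 \le p, q \le n$. -/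
open Finset in
lemma sq_decomp (a b : ℕ) (f : ℕ → ℕ → ℝ)
    (hf : ∀ p ∈ Ico a b, ∀ q ∈ Ico a b, f p q = f q p) :
    (∑ p ∈ Ico a b, ∑ q ∈ Ico a b, f p q)
      = (∑ p ∈ Ico a b, f p p) + 2 * ∑ p ∈ Ico a b, ∑ q ∈ Ico (p+1) b, f p q := by
  have split : ∀ p ∈ Ico a b, (∑ q ∈ Ico a b, f p q)
      = ((∑ q ∈ Ico a p, f p q) + f p p) + ∑ q ∈ Ico (p+1) b, f p q := by
    intro p hp
    rw [mem_Ico] at hp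
    rw [← Finset.sum_Ico_consecutive (fun q => f p q) (by omega : a ≤ p+1) (by omega : p+1 ≤ b),
      Finset.sum_Ico_succ_top (by omega : a ≤ p)]
  rw [Finset.sum_congr rfl split]
  have lower : (∑ p ∈ Ico a b, ∑ q ∈ Ico a p, f p q)
      = ∑ p ∈ Ico a b, ∑ q ∈ Ico (p+1) b, f p q := by
    rw [← Finset.sum_Ico_Ico_comm' a b (fun i j => f j i)]
    refine Finset.sum_congr rfl fun p hp => Finset.sum_congr rfl fun q hq => ?_
    rw [mem_Ico] at hp hq
    exact hf q (mem_Ico.2 (by omega)) p (mem_Ico.2 hp)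
  simp only [Finset.sum_add_distrib, lower]
  ring



/- STATEMENT 2: For `2 ≤ m ≤ n-1` with `n(m-2) < m² - 2` and a symmetric array
`(h_{pq})_{2 ≤ p,q ≤ n}` with `H = 0` and `𝒱₁ ≤ 0`, all entries `h_pq` vanish. -/
set_option maxHeartbeats 2000000 in
theorem stmt_2 (n m : ℕ) (hm : 2 ≤ m) (hmn : m + 1 ≤ n)
    (hdim : (n : ℝ) * ((m : ℝ) - 2) < (m : ℝ) ^ 2 - 2)
    (h : ℕ → ℕ → ℝ)
    (hsym : ∀ p ∈ Finset.Icc 2 n, ∀ q ∈ Finset.Icc 2 n, h p q = h q p)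
    (hH : ∑ p ∈ Finset.Icc 2 n, h p p = 0)
    (hV : (∑ p ∈ Finset.Icc 2 n, ∑ q ∈ Finset.Icc 2 n, (h p q) ^ 2)
      + ∑ p ∈ Finset.Icc 2 m, ∑ q ∈ Finset.Icc (p + 1) n,
          (h p p * h q q - (h p q) ^ 2) ≤ 0) :
    ∀ p ∈ Finset.Icc 2 n, ∀ q ∈ Finset.Icc 2 n, h p q = 0 := by
  classical
  simp only [← Finset.Ico_add_one_right_eq_Icc] at hsym hH hV ⊢
  set d : ℕ → ℝ := fun p => h p p with hd
  set A : ℝ := ∑ p ∈ Finset.Ico 2 (m+1), d p with hA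
  set B : ℝ := ∑ p ∈ Finset.Ico (m+1) (n+1), d p with hB
  set P : ℝ := ∑ p ∈ Finset.Ico 2 (m+1), (d p)^2 with hP
  set R : ℝ := ∑ p ∈ Finset.Ico (m+1) (n+1), (d p)^2 with hR
  set OffU : ℝ := ∑ p ∈ Finset.Ico 2 (n+1), ∑ q ∈ Finset.Ico (p+1) (n+1), (h p q)^2 with hOffU
  -- F0 : A + B = 0
  have hAB : A + B = 0 := by
    rw [hA, hB, Finset.sum_Ico_consecutive _ (by omega : 2 ≤ m+1) (by omega : m+1 ≤ n+1)]
    exact hH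
  -- F1 : SqAll = (P + R) + 2 OffU
  have hsym' : ∀ p ∈ Finset.Ico 2 (n+1), ∀ q ∈ Finset.Ico 2 (n+1),
      (h p q)^2 = (h q p)^2 := fun p hp q hq => by rw [hsym p hp q hq]
  have F1 : (∑ p ∈ Finset.Ico 2 (n+1), ∑ q ∈ Finset.Ico 2 (n+1), (h p q)^2)
      = (P + R) + 2 * OffU := by
    rw [sq_decomp 2 (n+1) (fun p q => (h p q)^2) hsym']
    rw [hP, hR, Finset.sum_Ico_consecutive _ (by omega : 2 ≤ m+1) (by omega : m+1 ≤ n+1)]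
  -- F3 : CrossSq ≤ OffU
  have F3 : (∑ p ∈ Finset.Ico 2 (m+1), ∑ q ∈ Finset.Ico (p+1) (n+1), (h p q)^2) ≤ OffU := by
    apply Finset.sum_le_sum_of_subset_of_nonneg
    · exact Finset.Ico_subset_Ico le_rfl (by omega)
    · intro p _ _
      exact Finset.sum_nonneg fun q _ => sq_nonneg _
  -- F5 : A² = P + 2 * UpT
  have F5 : A^2 = P + 2 * ∑ p ∈ Finset.Ico 2 (m+1), ∑ q ∈ Finset.Ico (p+1) (m+1), d p * d q := by
    have := sq_decomp 2 (m+1) (fun p q => d p * d q) (fun p _ q _ => mul_comm _ _)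
    rw [hA, sq, Finset.sum_mul_sum, this, hP]
    simp [sq]
  -- F4 : DD = UpT + A * B
  have F4 : (∑ p ∈ Finset.Ico 2 (m+1), ∑ q ∈ Finset.Ico (p+1) (n+1), d p * d q)
      = (∑ p ∈ Finset.Ico 2 (m+1), ∑ q ∈ Finset.Ico (p+1) (m+1), d p * d q) + A * B := by
    have inner : ∀ p ∈ Finset.Ico 2 (m+1), (∑ q ∈ Finset.Ico (p+1) (n+1), d p * d q)
        = (∑ q ∈ Finset.Ico (p+1) (m+1), d p * d q) + d p * B := by
      intro p hp
      rw [Finset.mem_Ico] at hp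
      rw [← Finset.sum_Ico_consecutive (fun q => d p * d q) (by omega : p+1 ≤ m+1)
        (by omega : m+1 ≤ n+1), hB, Finset.mul_sum]
    rw [Finset.sum_congr rfl inner, Finset.sum_add_distrib, ← Finset.sum_mul, ← hA]
  -- rewrite hV
  have hVsplit : (∑ p ∈ Finset.Ico 2 (m+1), ∑ q ∈ Finset.Ico (p+1) (n+1),
      (h p p * h q q - (h p q)^2))
      = (∑ p ∈ Finset.Ico 2 (m+1), ∑ q ∈ Finset.Ico (p+1) (n+1), d p * d q)
        - ∑ p ∈ Finset.Ico 2 (m+1), ∑ q ∈ Finset.Ico (p+1) (n+1), (h p q)^2 := by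
    rw [← Finset.sum_sub_distrib]
    exact Finset.sum_congr rfl fun p _ => by rw [← Finset.sum_sub_distrib]
  rw [hVsplit, F1, F4] at hV
  -- derive B = -A, and the key inequality
  have hBA : B = -A := by linarith
  have hQ : P + R + ((A^2 - P)/2 + A * B) + OffU ≤ 0 := by
    have : (∑ p ∈ Finset.Ico 2 (m+1), ∑ q ∈ Finset.Ico (p+1) (m+1), d p * d q)
        = (A^2 - P)/2 := by linarith [F5]
    linarith [F3, hV, this]
  have hQ' : P/2 + R - A^2/2 + OffU ≤ 0 := by
    rw [hBA] at hQ; nlinarith [hQ]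
  -- Cauchy-Schwarz
  have card1 : (((Finset.Ico 2 (m+1)).card : ℕ) : ℝ) = (m:ℝ) - 1 := by
    rw [Nat.card_Ico]
    have : m + 1 - 2 = m - 1 := by omega
    rw [this, Nat.cast_sub (by omega : 1 ≤ m)]; norm_num
  have card2 : (((Finset.Ico (m+1) (n+1)).card : ℕ) : ℝ) = (n:ℝ) - (m:ℝ) := by
    rw [Nat.card_Ico]
    have : n + 1 - (m + 1) = n - m := by omega
    rw [this, Nat.cast_sub (by omega : m ≤ n)]
  have cs1 : A^2 ≤ ((m:ℝ) - 1) * P := by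
    calc A^2 ≤ (((Finset.Ico 2 (m+1)).card : ℕ) : ℝ) * P := sq_sum_le_card_mul_sum_sq
      _ = ((m:ℝ) - 1) * P := by rw [card1]
  have cs2 : A^2 ≤ ((n:ℝ) - (m:ℝ)) * R := by
    have hB2 : B^2 ≤ (((Finset.Ico (m+1) (n+1)).card : ℕ) : ℝ) * R := sq_sum_le_card_mul_sum_sq
    rw [card2, hBA] at hB2; nlinarith [hB2]
  have hP0 : 0 ≤ P := Finset.sum_nonneg fun _ _ => sq_nonneg _
  have hR0 : 0 ≤ R := Finset.sum_nonneg fun _ _ => sq_nonneg _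
  have hOff0 : 0 ≤ OffU := Finset.sum_nonneg fun _ _ =>
    Finset.sum_nonneg fun _ _ => sq_nonneg _
  have hm' : (2:ℝ) ≤ (m:ℝ) := by exact_mod_cast hm
  have hn' : (m:ℝ) + 1 ≤ (n:ℝ) := by exact_mod_cast hmn
  clear_value d A B P R OffU
  clear hV F1 F3 F4 F5 hVsplit hQ hAB hBA hH hA hB
  -- A = 0
  have hA2c : A^2 * ((m:ℝ)^2 - 2 - (n:ℝ)*((m:ℝ)-2)) ≤ 0 := by
    have key : P + 2*R ≤ A^2 := by linarith
    have e1 : ((n:ℝ) - m) * A^2 ≤ ((n:ℝ) - m) * (((m:ℝ) - 1) * P) :=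
      mul_le_mul_of_nonneg_left cs1 (by linarith)
    have e2 : ((m:ℝ) - 1) * A^2 ≤ ((m:ℝ) - 1) * (((n:ℝ) - m) * R) :=
      mul_le_mul_of_nonneg_left cs2 (by linarith)
    have e3 : ((n:ℝ) - m) * (((m:ℝ) - 1) * (P + 2*R)) ≤ ((n:ℝ) - m) * (((m:ℝ) - 1) * A^2) :=
      mul_le_mul_of_nonneg_left (mul_le_mul_of_nonneg_left key (by linarith))
        (by linarith)
    nlinarith [e1, e2, e3]
  have hc : (0:ℝ) < (m:ℝ)^2 - 2 - (n:ℝ)*((m:ℝ)-2) := by linarith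
  have hAz : A = 0 := by
    by_contra hne
    have h1 : 0 < A^2 := by positivity
    have h2 : 0 < A^2 * ((m:ℝ)^2 - 2 - (n:ℝ)*((m:ℝ)-2)) := mul_pos h1 hc
    linarith [hA2c]
  rw [hAz] at hQ'
  norm_num at hQ'
  have hPz : P = 0 := by linarith
  have hRz : R = 0 := by linarith
  have hOffz : OffU = 0 := by linarith
  rw [hP] at hPz
  rw [hR] at hRz
  rw [hOffU] at hOffz
  -- extract pointwise vanishing
  have diag0 : ∀ p ∈ Finset.Ico 2 (n+1), d p = 0 := by
    intro p hp
    rw [Finset.mem_Ico] at hp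
    rcases le_or_gt p m with hpm | hpm
    · have := (Finset.sum_eq_zero_iff_of_nonneg (fun i _ => sq_nonneg (d i))).1 hPz p
        (Finset.mem_Ico.2 ⟨hp.1, by omega⟩)
      exact pow_eq_zero_iff (by norm_num) |>.1 this
    · have := (Finset.sum_eq_zero_iff_of_nonneg (fun i _ => sq_nonneg (d i))).1 hRz p
        (Finset.mem_Ico.2 ⟨by omega, hp.2⟩)
      exact pow_eq_zero_iff (by norm_num) |>.1 this
  have off0 : ∀ p ∈ Finset.Ico 2 (n+1), ∀ q ∈ Finset.Ico (p+1) (n+1), h p q = 0 := by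
    intro p hp q hq
    have h1 := (Finset.sum_eq_zero_iff_of_nonneg (fun i _ =>
      Finset.sum_nonneg fun j _ => sq_nonneg (h i j))).1 hOffz p hp
    have h2 := (Finset.sum_eq_zero_iff_of_nonneg (fun j _ => sq_nonneg (h p j))).1 h1 q hq
    exact pow_eq_zero_iff (by norm_num) |>.1 h2
  intro p hp q hq
  have hp' := Finset.mem_Ico.1 hp
  have hq' := Finset.mem_Ico.1 hq
  rcases lt_trichotomy p q with hlt | heq | hgt
  · exact off0 p hp q (Finset.mem_Ico.2 ⟨by omega, hq'.2⟩)
  · subst heq; simpa [hd] using diag0 p hp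
  · rw [hsym p hp q hq]
    exact off0 q hq p (Finset.mem_Ico.2 ⟨by omega, hp'.2⟩)
end

section
/- Let $n, m, k$ be integers with $2 \le k \le m-1$ and $m \le n-1$, and let $(h_{pq})_{k+1 \le p,q \le n}$ be real numbers with $h_{pq} = h_{qp}$ for all $p, q$. Then $\mathcal{V}_k \ge \frac{1}{2}\sum_{p=k+1}^{m} h_{pp}^2 + \sum_{q=m+1}^{n} h_{qq}^2 + \sum_{p=k+1}^{n-1}\sum_{q=p+1}^{n} h_{pq}^2 + \frac{1}{2(k-1)} A^2 - \Big(\frac{1}{2} - \frac{1}{2(k-1)}\Big) B^2 + \frac{1}{k-1} A B$, where $A = \sum_{p=k+1}^{m} h_{pp}$ and $B = \sum_{q=m+1}^{n} h_{qq}$. -/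
lemma tri (c : ℕ) (f : ℕ → ℕ → ℝ) (b : ℕ) :
    (∑ p ∈ Finset.Ioc c b, ∑ q ∈ Finset.Ioc c b, f p q)
      = (∑ p ∈ Finset.Ioc c b, f p p)
        + ∑ p ∈ Finset.Ioc c b, ∑ q ∈ Finset.Ioc p b, (f p q + f q p) := by
  induction b with
  | zero => simp
  | succ b ih =>
    rcases le_or_gt (b + 1) c with hc | hc
    · rw [Finset.Ioc_eq_empty (by omega)]; simp
    · have hcb : c ≤ b := Nat.lt_succ_iff.mp hc
      have e1 : ∀ p ∈ Finset.Ioc c b, ∑ q ∈ Finset.Ioc c (b+1), f p q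
          = ∑ q ∈ Finset.Ioc c b, f p q + f p (b+1) :=
        fun p _ => Finset.sum_Ioc_succ_top hcb _
      have e2 : ∀ p ∈ Finset.Ioc c b, ∑ q ∈ Finset.Ioc p (b+1), (f p q + f q p)
          = ∑ q ∈ Finset.Ioc p b, (f p q + f q p) + (f p (b+1) + f (b+1) p) :=
        fun p hp => Finset.sum_Ioc_succ_top (Finset.mem_Ioc.mp hp).2 _
      have l1 : ∑ p ∈ Finset.Ioc c (b+1), ∑ q ∈ Finset.Ioc c (b+1), f p q
          = (∑ p ∈ Finset.Ioc c b, ∑ q ∈ Finset.Ioc c b, f p q)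
            + (∑ p ∈ Finset.Ioc c b, f p (b+1))
            + (∑ q ∈ Finset.Ioc c b, f (b+1) q) + f (b+1) (b+1) := by
        rw [Finset.sum_Ioc_succ_top hcb, Finset.sum_congr rfl e1,
          Finset.sum_add_distrib, Finset.sum_Ioc_succ_top hcb]
        ring
      have l2 : ∑ p ∈ Finset.Ioc c (b+1), f p p
          = ∑ p ∈ Finset.Ioc c b, f p p + f (b+1) (b+1) :=
        Finset.sum_Ioc_succ_top hcb _
      have l3 : ∑ p ∈ Finset.Ioc c (b+1), ∑ q ∈ Finset.Ioc p (b+1), (f p q + f q p)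
          = (∑ p ∈ Finset.Ioc c b, ∑ q ∈ Finset.Ioc p b, (f p q + f q p))
            + (∑ p ∈ Finset.Ioc c b, f p (b+1))
            + (∑ p ∈ Finset.Ioc c b, f (b+1) p) := by
        rw [Finset.sum_Ioc_succ_top hcb, Finset.Ioc_self, Finset.sum_empty,
          Finset.sum_congr rfl e2, Finset.sum_add_distrib, Finset.sum_add_distrib]
        ring
      rw [l1, l2, l3]
      linarith [ih]

/- STATEMENT 3: For `2 ≤ k ≤ m-1`, `m ≤ n-1` and a symmetric array
`(h_{pq})_{k+1 ≤ p,q ≤ n}`, with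
`𝒱ₖ = |h|² - (½ - 1/(2(k-1))) H² + ∑_{p=k+1}^m ∑_{q=p+1}^n (h_pp h_qq - h_pq²)`,
`A = ∑_{p=k+1}^m h_pp`, `B = ∑_{q=m+1}^n h_qq`, one has
`𝒱ₖ ≥ ½∑_{p=k+1}^m h_pp² + ∑_{q=m+1}^n h_qq² + ∑_{p=k+1}^{n-1}∑_{q=p+1}^n h_pq²
  + A²/(2(k-1)) - (½ - 1/(2(k-1))) B² + AB/(k-1)`. -/
theorem stmt_3 (n m k : ℕ) (hk : 2 ≤ k) (hkm : k + 1 ≤ m) (hmn : m + 1 ≤ n)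
    (h : ℕ → ℕ → ℝ)
    (hsym : ∀ p ∈ Finset.Icc (k + 1) n, ∀ q ∈ Finset.Icc (k + 1) n, h p q = h q p)
    (A B : ℝ)
    (hA : A = ∑ p ∈ Finset.Icc (k + 1) m, h p p)
    (hB : B = ∑ q ∈ Finset.Icc (m + 1) n, h q q) :
    (∑ p ∈ Finset.Icc (k + 1) n, ∑ q ∈ Finset.Icc (k + 1) n, (h p q) ^ 2)
      - (1 / 2 - 1 / (2 * ((k : ℝ) - 1)))
          * (∑ p ∈ Finset.Icc (k + 1) n, h p p) ^ 2
      + ∑ p ∈ Finset.Icc (k + 1) m, ∑ q ∈ Finset.Icc (p + 1) n,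
          (h p p * h q q - (h p q) ^ 2)
    ≥ (1 / 2) * (∑ p ∈ Finset.Icc (k + 1) m, (h p p) ^ 2)
      + (∑ q ∈ Finset.Icc (m + 1) n, (h q q) ^ 2)
      + (∑ p ∈ Finset.Icc (k + 1) (n - 1), ∑ q ∈ Finset.Icc (p + 1) n, (h p q) ^ 2)
      + (1 / (2 * ((k : ℝ) - 1))) * A ^ 2
      - (1 / 2 - 1 / (2 * ((k : ℝ) - 1))) * B ^ 2
      + (1 / ((k : ℝ) - 1)) * A * B := by
  obtain ⟨N, rfl⟩ : ∃ N, n = N + 1 := ⟨n - 1, by omega⟩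
  subst hA hB
  simp only [Nat.add_sub_cancel, Finset.Icc_add_one_left_eq_Ioc] at *
  have hkm' : k ≤ m := by omega
  have hmn' : m ≤ N + 1 := by omega
  have H1 : ∑ p ∈ Finset.Ioc k (N+1), ∑ q ∈ Finset.Ioc k (N+1), h p q ^ 2
      = (∑ p ∈ Finset.Ioc k (N+1), h p p ^ 2)
        + 2 * ∑ p ∈ Finset.Ioc k (N+1), ∑ q ∈ Finset.Ioc p (N+1), h p q ^ 2 := by
    rw [tri]
    congr 1
    rw [Finset.mul_sum]
    refine Finset.sum_congr rfl fun p hp => ?_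
    rw [Finset.mul_sum]
    refine Finset.sum_congr rfl fun q hq => ?_
    have hp' := Finset.mem_Ioc.mp hp
    have hq' := Finset.mem_Ioc.mp hq
    rw [hsym q (Finset.mem_Ioc.mpr ⟨by omega, by omega⟩) p hp]
    ring
  have H2a : (∑ p ∈ Finset.Ioc k m, h p p ^ 2) + ∑ p ∈ Finset.Ioc m (N+1), h p p ^ 2
      = ∑ p ∈ Finset.Ioc k (N+1), h p p ^ 2 :=
    Finset.sum_Ioc_consecutive _ hkm' hmn'
  have H2b : (∑ p ∈ Finset.Ioc k m, ∑ q ∈ Finset.Ioc p (N+1), h p q ^ 2)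
      + ∑ p ∈ Finset.Ioc m (N+1), ∑ q ∈ Finset.Ioc p (N+1), h p q ^ 2
      = ∑ p ∈ Finset.Ioc k (N+1), ∑ q ∈ Finset.Ioc p (N+1), h p q ^ 2 :=
    Finset.sum_Ioc_consecutive _ hkm' hmn'
  have H3 : (∑ p ∈ Finset.Ioc k m, h p p) + ∑ p ∈ Finset.Ioc m (N+1), h p p
      = ∑ p ∈ Finset.Ioc k (N+1), h p p :=
    Finset.sum_Ioc_consecutive _ hkm' hmn'
  have H5 : ∑ p ∈ Finset.Ioc k m, ∑ q ∈ Finset.Ioc p (N+1), (h p p * h q q - h p q ^ 2)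
      = (∑ p ∈ Finset.Ioc k m, ∑ q ∈ Finset.Ioc p m, h p p * h q q)
        + (∑ p ∈ Finset.Ioc k m, h p p) * (∑ q ∈ Finset.Ioc m (N+1), h q q)
        - ∑ p ∈ Finset.Ioc k m, ∑ q ∈ Finset.Ioc p (N+1), h p q ^ 2 := by
    have H5a : ∑ p ∈ Finset.Ioc k m, ∑ q ∈ Finset.Ioc p (N+1), (h p p * h q q - h p q ^ 2)
        = (∑ p ∈ Finset.Ioc k m, ∑ q ∈ Finset.Ioc p (N+1), h p p * h q q)
          - ∑ p ∈ Finset.Ioc k m, ∑ q ∈ Finset.Ioc p (N+1), h p q ^ 2 := by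
      rw [← Finset.sum_sub_distrib]
      exact Finset.sum_congr rfl fun p _ => Finset.sum_sub_distrib _ _
    have H5b : ∀ p ∈ Finset.Ioc k m, ∑ q ∈ Finset.Ioc p (N+1), h p p * h q q
        = (∑ q ∈ Finset.Ioc p m, h p p * h q q)
          + h p p * ∑ q ∈ Finset.Ioc m (N+1), h q q := by
      intro p hp
      rw [← Finset.sum_Ioc_consecutive (fun q => h p p * h q q) (Finset.mem_Ioc.mp hp).2 hmn',
        Finset.mul_sum]
    have H5c : ∑ p ∈ Finset.Ioc k m, ∑ q ∈ Finset.Ioc p (N+1), h p p * h q q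
        = (∑ p ∈ Finset.Ioc k m, ∑ q ∈ Finset.Ioc p m, h p p * h q q)
          + (∑ p ∈ Finset.Ioc k m, h p p) * ∑ q ∈ Finset.Ioc m (N+1), h q q := by
      rw [Finset.sum_congr rfl H5b, Finset.sum_add_distrib, Finset.sum_mul]
    rw [H5a, H5c]
  have H6 : (∑ p ∈ Finset.Ioc k m, h p p) ^ 2
      = (∑ p ∈ Finset.Ioc k m, h p p ^ 2)
        + 2 * ∑ p ∈ Finset.Ioc k m, ∑ q ∈ Finset.Ioc p m, h p p * h q q := by
    have e : (∑ p ∈ Finset.Ioc k m, h p p) ^ 2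
        = ∑ p ∈ Finset.Ioc k m, ∑ q ∈ Finset.Ioc k m, h p p * h q q := by
      rw [sq, Finset.sum_mul_sum]
    rw [e, tri]
    congr 1
    · exact Finset.sum_congr rfl fun p _ => (sq (h p p)).symm ▸ rfl
    rw [Finset.mul_sum]
    refine Finset.sum_congr rfl fun p _ => ?_
    rw [Finset.mul_sum]
    exact Finset.sum_congr rfl fun q _ => by ring
  have H7 : ∑ p ∈ Finset.Ioc k N, ∑ q ∈ Finset.Ioc p (N+1), h p q ^ 2
      = ∑ p ∈ Finset.Ioc k (N+1), ∑ q ∈ Finset.Ioc p (N+1), h p q ^ 2 := by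
    rw [Finset.sum_Ioc_succ_top (show k ≤ N by omega), Finset.Ioc_self,
      Finset.sum_empty, add_zero]
  have H8 : (0:ℝ) ≤ ∑ p ∈ Finset.Ioc m (N+1), ∑ q ∈ Finset.Ioc p (N+1), h p q ^ 2 := by
    positivity
  have hr : 1 / ((k:ℝ) - 1) = 2 * (1 / (2 * ((k:ℝ) - 1))) := by
    rw [one_div, one_div, mul_inv]
    ring
  rw [← H3, hr]
  set r : ℝ := 1 / (2 * ((k:ℝ) - 1)) with hrdef
  nlinarith [H1, H2a, H2b, H5, H6, H7, H8]
end

section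
/- Let $n, m, k$ be integers with $2 \le k \le m-1$ and $m \le n-1$, and let $(h_{pq})_{k+1 \le p,q \le n}$ be real numbers with $h_{pq} = h_{qp}$ for all $p, q$. Then $\mathcal{V}_k \ge \frac{m^2 - 2 - n(m-2)}{2(m-1)(n-m)} \Big(\sum_{q=m+1}^{n} h_{qq}\Big)^2$. -/
open Finset

/-- Pair-sum identity: `2 ∑_{a<p<q≤b} f p f q + ∑ f p ^2 = (∑ f p)^2`. -/
lemma pairs_aux (f : ℕ → ℝ) (a : ℕ) : ∀ b : ℕ,
    2 * ∑ p ∈ Ioc a b, ∑ q ∈ Ioc p b, f p * f q + ∑ p ∈ Ioc a b, (f p) ^ 2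
      = (∑ p ∈ Ioc a b, f p) ^ 2 := by
  intro b
  induction b with
  | zero => simp
  | succ b ih =>
    rcases le_or_gt (b + 1) a with hba | hab
    · rw [Ioc_eq_empty (by omega)]; simp
    · have hab' : a ≤ b := by omega
      rw [Finset.sum_Ioc_succ_top hab', Finset.sum_Ioc_succ_top hab',
        Finset.sum_Ioc_succ_top hab']
      have hinner : ∀ p ∈ Ioc a b, ∑ q ∈ Ioc p (b + 1), f p * f q
          = (∑ q ∈ Ioc p b, f p * f q) + f p * f (b + 1) := by
        intro p hp
        exact Finset.sum_Ioc_succ_top (mem_Ioc.1 hp).2 _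
      rw [Finset.sum_congr rfl hinner, Finset.sum_add_distrib, Ioc_self,
        Finset.sum_empty, ← Finset.sum_mul]
      nlinarith [ih]

/-- Scalar core inequality. -/
lemma final_aux (K M N A B Sm Sn : ℝ) (hK : 2 ≤ K) (hM : K + 1 ≤ M) (hN : M + 1 ≤ N)
    (h1 : A ^ 2 ≤ (M - K) * Sm) (h2 : B ^ 2 ≤ (N - M) * Sn) :
    (M ^ 2 - 2 - N * (M - 2)) / (2 * (M - 1) * (N - M)) * B ^ 2
      ≤ Sm + Sn - (1 / 2 - 1 / (2 * (K - 1))) * (A + B) ^ 2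
        + ((A ^ 2 - Sm) / 2 + A * B) := by
  have p1 : (0:ℝ) < K - 1 := by linarith
  have p2 : (0:ℝ) < M - 1 := by linarith
  have p3 : (0:ℝ) < N - M := by linarith
  have p4 : (0:ℝ) < M - K := by linarith
  have key : Sm + Sn - (1 / 2 - 1 / (2 * (K - 1))) * (A + B) ^ 2
        + ((A ^ 2 - Sm) / 2 + A * B)
        - (M ^ 2 - 2 - N * (M - 2)) / (2 * (M - 1) * (N - M)) * B ^ 2
      = (Sm - A ^ 2 / (M - K)) / 2 + (Sn - B ^ 2 / (N - M))
        + (A ^ 2 / (2 * (M - K)) + (A + B) ^ 2 / (2 * (K - 1))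
            - B ^ 2 / (2 * (M - 1))) := by
    field_simp
    ring
  have t1 : A ^ 2 / (M - K) ≤ Sm := by
    rw [div_le_iff₀ p4]; nlinarith
  have t2 : B ^ 2 / (N - M) ≤ Sn := by
    rw [div_le_iff₀ p3]; nlinarith
  have t3 : B ^ 2 / (2 * (M - 1)) ≤ A ^ 2 / (2 * (M - K)) + (A + B) ^ 2 / (2 * (K - 1)) := by
    rw [div_add_div _ _ (by positivity) (by positivity), div_le_div_iff₀ (by positivity)
      (by positivity)]
    nlinarith [sq_nonneg ((K - 1) * A + (M - K) * (A + B)), mul_pos p1 p4,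
      sq_nonneg (A + B), sq_nonneg A]
  linarith

/- STATEMENT 4: For `2 ≤ k ≤ m-1`, `m ≤ n-1` and a symmetric array
`(h_{pq})_{k+1 ≤ p,q ≤ n}`, one has
`𝒱ₖ ≥ (m² - 2 - n(m-2)) / (2(m-1)(n-m)) · (∑_{q=m+1}^n h_qq)²`. -/
theorem stmt_4 (n m k : ℕ) (hk : 2 ≤ k) (hkm : k + 1 ≤ m) (hmn : m + 1 ≤ n)
    (h : ℕ → ℕ → ℝ)
    (hsym : ∀ p ∈ Finset.Icc (k + 1) n, ∀ q ∈ Finset.Icc (k + 1) n, h p q = h q p) :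
    (∑ p ∈ Finset.Icc (k + 1) n, ∑ q ∈ Finset.Icc (k + 1) n, (h p q) ^ 2)
      - (1 / 2 - 1 / (2 * ((k : ℝ) - 1)))
          * (∑ p ∈ Finset.Icc (k + 1) n, h p p) ^ 2
      + ∑ p ∈ Finset.Icc (k + 1) m, ∑ q ∈ Finset.Icc (p + 1) n,
          (h p p * h q q - (h p q) ^ 2)
    ≥ ((m : ℝ) ^ 2 - 2 - (n : ℝ) * ((m : ℝ) - 2))
        / (2 * ((m : ℝ) - 1) * ((n : ℝ) - (m : ℝ)))
        * (∑ q ∈ Finset.Icc (m + 1) n, h q q) ^ 2 := by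
  simp only [Finset.Icc_add_one_left_eq_Ioc] at *
  have hkm' : k ≤ m := by omega
  have hmn' : m ≤ n := by omega
  set A : ℝ := ∑ p ∈ Ioc k m, h p p with hA
  set B : ℝ := ∑ q ∈ Ioc m n, h q q with hB
  set Sm : ℝ := ∑ p ∈ Ioc k m, (h p p) ^ 2 with hSm
  set Sn : ℝ := ∑ q ∈ Ioc m n, (h q q) ^ 2 with hSn
  set Off : ℝ := ∑ p ∈ Ioc k m, ∑ q ∈ Ioc p n, (h p q) ^ 2 with hOff
  -- diagonal sums split
  have hdiag : ∑ p ∈ Ioc k n, h p p = A + B :=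
    (Finset.sum_Ioc_consecutive _ hkm' hmn').symm
  have hdiag2 : ∑ p ∈ Ioc k n, (h p p) ^ 2 = Sm + Sn :=
    (Finset.sum_Ioc_consecutive _ hkm' hmn').symm
  -- square-sum lower bound
  have hsq : (∑ p ∈ Ioc k n, ∑ q ∈ Ioc k n, (h p q) ^ 2)
      ≥ (Sm + Sn) + Off := by
    have hsplit : ∀ p ∈ Ioc k n, ∑ q ∈ Ioc k n, (h p q) ^ 2
        = (h p p) ^ 2 + ∑ q ∈ (Ioc k n).erase p, (h p q) ^ 2 := by
      intro p hp
      exact (Finset.add_sum_erase _ _ hp).symm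
    rw [Finset.sum_congr rfl hsplit, Finset.sum_add_distrib, hdiag2]
    have hsub : Off ≤ ∑ p ∈ Ioc k n, ∑ q ∈ (Ioc k n).erase p, (h p q) ^ 2 := by
      calc Off ≤ ∑ p ∈ Ioc k m, ∑ q ∈ (Ioc k n).erase p, (h p q) ^ 2 := by
            apply Finset.sum_le_sum
            intro p hp
            apply Finset.sum_le_sum_of_subset_of_nonneg
            · intro q hq
              simp only [mem_erase, mem_Ioc] at *
              omega
            · intro q _ _; positivity
        _ ≤ _ := by
            apply Finset.sum_le_sum_of_subset_of_nonneg
            · intro p hp; simp only [mem_Ioc] at *; omega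
            · intro p _ _; positivity
    linarith
  -- cross-term identity
  have hcross : ∑ p ∈ Ioc k m, ∑ q ∈ Ioc p n, (h p p * h q q - (h p q) ^ 2)
      = ((A ^ 2 - Sm) / 2 + A * B) - Off := by
    have h1 : ∀ p ∈ Ioc k m, ∑ q ∈ Ioc p n, (h p p * h q q - (h p q) ^ 2)
        = ((∑ q ∈ Ioc p m, h p p * h q q) + h p p * B)
          - ∑ q ∈ Ioc p n, (h p q) ^ 2 := by
      intro p hp
      rw [Finset.sum_sub_distrib]
      congr 1
      rw [← Finset.sum_Ioc_consecutive _ (mem_Ioc.1 hp).2 hmn', Finset.mul_sum]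
    rw [Finset.sum_congr rfl h1, Finset.sum_sub_distrib, Finset.sum_add_distrib,
      ← Finset.sum_mul]
    have hpairs := pairs_aux (fun p => h p p) k m
    have e1 : (∑ x ∈ Ioc k m, ∑ q ∈ Ioc x n, h x q ^ 2) = Off := rfl
    have e2 : (∑ p ∈ Ioc k m, h p p) = A := rfl
    have e3 : (∑ p ∈ Ioc k m, h p p ^ 2) = Sm := rfl
    rw [e2, e3] at hpairs
    rw [e1]
    linarith [hpairs]
  -- Cauchy–Schwarz bounds
  have hcard1 : ((Ioc k m).card : ℝ) = (m : ℝ) - (k : ℝ) := by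
    rw [Nat.card_Ioc]; push_cast [hkm']; ring
  have hcard2 : ((Ioc m n).card : ℝ) = (n : ℝ) - (m : ℝ) := by
    rw [Nat.card_Ioc]; push_cast [hmn']; ring
  have hc1 : A ^ 2 ≤ ((m : ℝ) - (k : ℝ)) * Sm := by
    rw [← hcard1]
    exact_mod_cast sq_sum_le_card_mul_sum_sq (s := Ioc k m) (f := fun p => h p p)
  have hc2 : B ^ 2 ≤ ((n : ℝ) - (m : ℝ)) * Sn := by
    rw [← hcard2]
    exact_mod_cast sq_sum_le_card_mul_sum_sq (s := Ioc m n) (f := fun q => h q q)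
  have hK : (2:ℝ) ≤ (k:ℝ) := by exact_mod_cast hk
  have hM : (k:ℝ) + 1 ≤ (m:ℝ) := by exact_mod_cast hkm
  have hN : (m:ℝ) + 1 ≤ (n:ℝ) := by exact_mod_cast hmn
  have := final_aux (k:ℝ) (m:ℝ) (n:ℝ) A B Sm Sn hK hM hN hc1 hc2
  rw [hdiag, hcross]
  linarith
end

section
/- Let $n, m, k$ be integers with $2 \le k \le m-1$, $m \le n-1$, and $n(m-2) < m^2 - 2$, and let $(h_{pq})_{k+1 \le p,q \le n}$ be real numbers with $h_{pq} = h_{qp}$ for all $p, q$. If $\mathcal{V}_k \le 0$, then $h_{pq} = 0$ for all $k+1 \le p, q \le n$. -/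
set_option maxHeartbeats 1000000

lemma sym_split_aux (a b : ℕ) (f : ℕ → ℕ → ℝ)
    (hf : ∀ p ∈ Finset.Ico a b, ∀ q ∈ Finset.Ico a b, f p q = f q p) :
    ∑ p ∈ Finset.Ico a b, ∑ q ∈ Finset.Ico a b, f p q
      = ∑ p ∈ Finset.Ico a b, f p p
        + 2 * ∑ p ∈ Finset.Ico a b, ∑ q ∈ Finset.Ico (p + 1) b, f p q := by
  have hsplit : ∀ p ∈ Finset.Ico a b,
      ∑ q ∈ Finset.Ico a b, f p q
        = (∑ q ∈ Finset.Ico a p, f p q)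
          + (f p p + ∑ q ∈ Finset.Ico (p + 1) b, f p q) := by
    intro p hp
    rw [Finset.mem_Ico] at hp
    rw [← Finset.sum_Ico_consecutive (fun q => f p q) hp.1 hp.2.le,
        Finset.sum_eq_sum_Ico_succ_bot hp.2 (fun q => f p q)]
  rw [Finset.sum_congr rfl hsplit, Finset.sum_add_distrib, Finset.sum_add_distrib]
  have hL : ∑ p ∈ Finset.Ico a b, ∑ q ∈ Finset.Ico a p, f p q
      = ∑ p ∈ Finset.Ico a b, ∑ q ∈ Finset.Ico (p + 1) b, f p q := by
    rw [← Finset.sum_Ico_Ico_comm' a b (fun i j => f j i)]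
    refine Finset.sum_congr rfl fun p hp => Finset.sum_congr rfl fun q hq => ?_
    rw [Finset.mem_Ico] at hp hq
    exact hf q (Finset.mem_Ico.mpr ⟨by omega, hq.2⟩) p (Finset.mem_Ico.mpr hp)
  rw [hL]; ring

theorem stmt_5 (n m k : ℕ) (hk : 2 ≤ k) (hkm : k + 1 ≤ m) (hmn : m + 1 ≤ n)
    (hdim : (n : ℝ) * ((m : ℝ) - 2) < (m : ℝ) ^ 2 - 2)
    (h : ℕ → ℕ → ℝ)
    (hsym : ∀ p ∈ Finset.Icc (k + 1) n, ∀ q ∈ Finset.Icc (k + 1) n, h p q = h q p)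
    (hV : (∑ p ∈ Finset.Icc (k + 1) n, ∑ q ∈ Finset.Icc (k + 1) n, (h p q) ^ 2)
      - (1 / 2 - 1 / (2 * ((k : ℝ) - 1)))
          * (∑ p ∈ Finset.Icc (k + 1) n, h p p) ^ 2
      + ∑ p ∈ Finset.Icc (k + 1) m, ∑ q ∈ Finset.Icc (p + 1) n,
          (h p p * h q q - (h p q) ^ 2) ≤ 0) :
    ∀ p ∈ Finset.Icc (k + 1) n, ∀ q ∈ Finset.Icc (k + 1) n, h p q = 0 := by
  simp only [← Finset.Ico_add_one_right_eq_Icc, Nat.succ_eq_add_one] at hV hsym ⊢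
  have hkm' : k + 1 ≤ m + 1 := by omega
  have hmn' : m + 1 ≤ n + 1 := by omega
  set A := ∑ p ∈ Finset.Ico (k + 1) (m + 1), h p p with hA
  set T := ∑ p ∈ Finset.Ico (m + 1) (n + 1), h p p with hT
  set S1 := ∑ p ∈ Finset.Ico (k + 1) (m + 1), (h p p) ^ 2 with hS1
  set S2 := ∑ p ∈ Finset.Ico (m + 1) (n + 1), (h p p) ^ 2 with hS2
  set R1 := ∑ p ∈ Finset.Ico (k + 1) (m + 1),
      ∑ q ∈ Finset.Ico (p + 1) (n + 1), (h p q) ^ 2 with hR1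
  set R2 := ∑ p ∈ Finset.Ico (m + 1) (n + 1),
      ∑ q ∈ Finset.Ico (p + 1) (n + 1), (h p q) ^ 2 with hR2
  have eqH : (∑ p ∈ Finset.Ico (k + 1) (n + 1), h p p) = A + T :=
    (Finset.sum_Ico_consecutive (fun p => h p p) hkm' hmn').symm
  have eq1 : (∑ p ∈ Finset.Ico (k + 1) (n + 1),
        ∑ q ∈ Finset.Ico (k + 1) (n + 1), (h p q) ^ 2)
      = (S1 + S2) + 2 * (R1 + R2) := by
    rw [sym_split_aux (k + 1) (n + 1) (fun p q => (h p q) ^ 2)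
      (fun p hp q hq => by show h p q ^ 2 = h q p ^ 2; rw [hsym p hp q hq]),
      ← Finset.sum_Ico_consecutive (fun p => (h p p) ^ 2) hkm' hmn',
      ← Finset.sum_Ico_consecutive
        (fun p => ∑ q ∈ Finset.Ico (p + 1) (n + 1), (h p q) ^ 2) hkm' hmn']
  have eq3 : (∑ p ∈ Finset.Ico (k + 1) (m + 1), ∑ q ∈ Finset.Ico (p + 1) (n + 1),
        (h p p * h q q - (h p q) ^ 2))
      = ((A * A - S1) / 2 + A * T) - R1 := by
    have e31 : (∑ p ∈ Finset.Ico (k + 1) (m + 1), ∑ q ∈ Finset.Ico (p + 1) (n + 1),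
          (h p p * h q q - (h p q) ^ 2))
        = (∑ p ∈ Finset.Ico (k + 1) (m + 1), ∑ q ∈ Finset.Ico (p + 1) (n + 1),
            h p p * h q q) - R1 := by
      rw [hR1, ← Finset.sum_sub_distrib]
      exact Finset.sum_congr rfl fun p _ => by rw [← Finset.sum_sub_distrib]
    have e32 : (∑ p ∈ Finset.Ico (k + 1) (m + 1), ∑ q ∈ Finset.Ico (p + 1) (n + 1),
          h p p * h q q)
        = (∑ p ∈ Finset.Ico (k + 1) (m + 1), ∑ q ∈ Finset.Ico (p + 1) (m + 1),
            h p p * h q q) + A * T := by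
      have hinner : ∀ p ∈ Finset.Ico (k + 1) (m + 1),
          (∑ q ∈ Finset.Ico (p + 1) (n + 1), h p p * h q q)
            = (∑ q ∈ Finset.Ico (p + 1) (m + 1), h p p * h q q) + h p p * T := by
        intro p hp
        rw [Finset.mem_Ico] at hp
        rw [← Finset.sum_Ico_consecutive (fun q => h p p * h q q)
            (by omega : p + 1 ≤ m + 1) hmn', hT, Finset.mul_sum]
      rw [Finset.sum_congr rfl hinner, Finset.sum_add_distrib, ← Finset.sum_mul, ← hA]
    have e33 : 2 * (∑ p ∈ Finset.Ico (k + 1) (m + 1), ∑ q ∈ Finset.Ico (p + 1) (m + 1),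
          h p p * h q q) = A * A - S1 := by
      have hss := sym_split_aux (k + 1) (m + 1) (fun p q => h p p * h q q)
        (fun p _ q _ => by show h p p * h q q = h q q * h p p; ring)
      rw [show (∑ p ∈ Finset.Ico (k + 1) (m + 1), ∑ q ∈ Finset.Ico (k + 1) (m + 1),
          h p p * h q q) = A * A by rw [hA, Finset.sum_mul_sum]] at hss
      have hdiag : (∑ p ∈ Finset.Ico (k + 1) (m + 1), h p p * h p p) = S1 := by
        rw [hS1]; exact Finset.sum_congr rfl fun p _ => (sq (h p p)).symm
      rw [hdiag] at hss
      linarith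
    rw [e31, e32]
    linarith
  rw [eq1, eqH, eq3] at hV
  set K : ℝ := (k : ℝ) - 1 with hKdef
  have hK1 : (1 : ℝ) ≤ K := by
    have : (2 : ℝ) ≤ (k : ℝ) := by exact_mod_cast hk
    rw [hKdef]; linarith
  set aR : ℝ := (m : ℝ) - (k : ℝ) with haR
  set bR : ℝ := (n : ℝ) - (m : ℝ) with hbR
  have ha1 : (1 : ℝ) ≤ aR := by
    have : (k : ℝ) + 1 ≤ (m : ℝ) := by exact_mod_cast hkm
    rw [haR]; linarith
  have hb1 : (1 : ℝ) ≤ bR := by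
    have : (m : ℝ) + 1 ≤ (n : ℝ) := by exact_mod_cast hmn
    rw [hbR]; linarith
  have hKpos : (0 : ℝ) < K := by linarith
  have hapos : (0 : ℝ) < aR := by linarith
  have hbpos : (0 : ℝ) < bR := by linarith
  have hdim' : bR * (K + aR - 1) < 2 * (K + aR) := by
    rw [hbR, hKdef, haR]; linarith [hdim]
  have cauchyA : A ^ 2 ≤ aR * S1 := by
    have h2 := sq_sum_le_card_mul_sum_sq (s := Finset.Ico (k + 1) (m + 1))
      (f := fun p => h p p)
    rw [Nat.card_Ico] at h2
    have hc : aR = ((m + 1 - (k + 1) : ℕ) : ℝ) := by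
      rw [haR, Nat.cast_sub (by omega : k + 1 ≤ m + 1)]; push_cast; ring
    rw [hA, hS1, hc]
    simpa using h2
  have cauchyT : T ^ 2 ≤ bR * S2 := by
    have h2 := sq_sum_le_card_mul_sum_sq (s := Finset.Ico (m + 1) (n + 1))
      (f := fun p => h p p)
    rw [Nat.card_Ico] at h2
    have hc : bR = ((n + 1 - (m + 1) : ℕ) : ℝ) := by
      rw [hbR, Nat.cast_sub (by omega : m + 1 ≤ n + 1)]; push_cast; ring
    rw [hT, hS2, hc]
    simpa using h2
  have hS1n : 0 ≤ S1 := Finset.sum_nonneg fun p _ => sq_nonneg _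
  have hS2n : 0 ≤ S2 := Finset.sum_nonneg fun p _ => sq_nonneg _
  have hR1n : 0 ≤ R1 :=
    Finset.sum_nonneg fun p _ => Finset.sum_nonneg fun q _ => sq_nonneg _
  have hR2n : 0 ≤ R2 :=
    Finset.sum_nonneg fun p _ => Finset.sum_nonneg fun q _ => sq_nonneg _
  have h2K : (0 : ℝ) < 2 * K := by linarith
  have hKne : K ≠ 0 := ne_of_gt hKpos
  have heq : 2 * K * ((S1 + S2) + 2 * (R1 + R2)
      - (1 / 2 - 1 / (2 * K)) * (A + T) ^ 2
      + (((A * A - S1) / 2 + A * T) - R1))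
      = K * S1 + 2 * K * S2 + 2 * K * R1 + 4 * K * R2
        + A ^ 2 + 2 * A * T - (K - 1) * T ^ 2 := by
    field_simp
    ring
  have hV2 : K * S1 + 2 * K * S2 + 2 * K * R1 + 4 * K * R2
      + A ^ 2 + 2 * A * T - (K - 1) * T ^ 2 ≤ 0 := by
    have hmul := mul_le_mul_of_nonneg_left hV h2K.le
    rw [mul_zero] at hmul
    rw [heq] at hmul
    exact hmul
  have p1 : 0 ≤ K * bR * (aR * S1 - A ^ 2) := by
    apply mul_nonneg (by positivity); linarith
  have p2 : 0 ≤ 2 * K * aR * (bR * S2 - T ^ 2) := by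
    apply mul_nonneg (by positivity); linarith
  have p3 := mul_le_mul_of_nonneg_left hV2 (by positivity : (0:ℝ) ≤ aR * bR)
  rw [mul_zero] at p3
  have hstar : bR * (K + aR) * A ^ 2 + 2 * aR * bR * A * T
      + aR * (2 * K - (K - 1) * bR) * T ^ 2
      + 2 * K * aR * bR * R1 + 4 * K * aR * bR * R2 ≤ 0 := by
    linarith [p1, p2, p3]
  have hcoef : 0 < aR * bR * K * (2 * (K + aR) - bR * (K + aR - 1)) := by
    apply mul_pos (by positivity); linarith
  have hKapos : (0 : ℝ) < bR * (K + aR) := by positivity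
  have hsq := sq_nonneg (bR * (K + aR) * A + aR * bR * T)
  have hmul2 := mul_le_mul_of_nonneg_left hstar hKapos.le
  rw [mul_zero] at hmul2
  have t1 : 0 ≤ (bR * (K + aR)) * (2 * K * aR * bR * R1) :=
    mul_nonneg hKapos.le (mul_nonneg (by positivity) hR1n)
  have t2 : 0 ≤ (bR * (K + aR)) * (4 * K * aR * bR * R2) :=
    mul_nonneg hKapos.le (mul_nonneg (by positivity) hR2n)
  have hcT : aR * bR * K * (2 * (K + aR) - bR * (K + aR - 1)) * T ^ 2 ≤ 0 := by
    linarith [hmul2, hsq, t1, t2]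
  have hTz : T = 0 := by
    have hT2 : T ^ 2 ≤ 0 := by
      by_contra hcon
      push_neg at hcon
      have := mul_pos hcoef hcon
      linarith
    exact sq_eq_zero_iff.mp (le_antisymm hT2 (sq_nonneg T))
  rw [hTz] at hstar
  have q1 : 0 ≤ 2 * K * aR * bR * R1 := mul_nonneg (by positivity) hR1n
  have q2 : 0 ≤ 4 * K * aR * bR * R2 := mul_nonneg (by positivity) hR2n
  have hAz : A = 0 := by
    have hA2 : A ^ 2 ≤ 0 := by
      by_contra hcon
      push_neg at hcon
      have := mul_pos hKapos hcon
      linarith [hstar, q1, q2]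
    exact sq_eq_zero_iff.mp (le_antisymm hA2 (sq_nonneg A))
  have hR1z : R1 = 0 := by
    refine le_antisymm ?_ hR1n
    by_contra hcon
    push_neg at hcon
    have := mul_pos (by positivity : (0:ℝ) < 2 * K * aR * bR) hcon
    linarith [hstar, q2, mul_nonneg hKapos.le (sq_nonneg A)]
  have hR2z : R2 = 0 := by
    refine le_antisymm ?_ hR2n
    by_contra hcon
    push_neg at hcon
    have := mul_pos (by positivity : (0:ℝ) < 4 * K * aR * bR) hcon
    linarith [hstar, q1, mul_nonneg hKapos.le (sq_nonneg A)]
  rw [hTz, hAz, hR1z, hR2z] at hV2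
  have hS1z : S1 = 0 := by
    refine le_antisymm ?_ hS1n
    by_contra hcon
    push_neg at hcon
    have := mul_pos hKpos hcon
    linarith [hV2, mul_nonneg hKpos.le hS2n]
  have hS2z : S2 = 0 := by
    refine le_antisymm ?_ hS2n
    by_contra hcon
    push_neg at hcon
    have := mul_pos hKpos hcon
    linarith [hV2, mul_nonneg hKpos.le hS1n]
  have zdiag1 : ∀ p ∈ Finset.Ico (k + 1) (m + 1), h p p = 0 := by
    intro p hp
    have h0 := (Finset.sum_eq_zero_iff_of_nonneg (fun i _ => sq_nonneg (h i i))).mp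
      (by rw [← hS1]; exact hS1z) p hp
    exact sq_eq_zero_iff.mp h0
  have zdiag2 : ∀ p ∈ Finset.Ico (m + 1) (n + 1), h p p = 0 := by
    intro p hp
    have h0 := (Finset.sum_eq_zero_iff_of_nonneg (fun i _ => sq_nonneg (h i i))).mp
      (by rw [← hS2]; exact hS2z) p hp
    exact sq_eq_zero_iff.mp h0
  have zoff1 : ∀ p ∈ Finset.Ico (k + 1) (m + 1), ∀ q ∈ Finset.Ico (p + 1) (n + 1),
      h p q = 0 := by
    intro p hp q hq
    have h0 := (Finset.sum_eq_zero_iff_of_nonneg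
      (fun i _ => Finset.sum_nonneg fun j _ => sq_nonneg (h i j))).mp
      (by rw [← hR1]; exact hR1z) p hp
    have h1 := (Finset.sum_eq_zero_iff_of_nonneg (fun j _ => sq_nonneg (h p j))).mp h0 q hq
    exact sq_eq_zero_iff.mp h1
  have zoff2 : ∀ p ∈ Finset.Ico (m + 1) (n + 1), ∀ q ∈ Finset.Ico (p + 1) (n + 1),
      h p q = 0 := by
    intro p hp q hq
    have h0 := (Finset.sum_eq_zero_iff_of_nonneg
      (fun i _ => Finset.sum_nonneg fun j _ => sq_nonneg (h i j))).mp
      (by rw [← hR2]; exact hR2z) p hp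
    have h1 := (Finset.sum_eq_zero_iff_of_nonneg (fun j _ => sq_nonneg (h p j))).mp h0 q hq
    exact sq_eq_zero_iff.mp h1
  have main : ∀ p ∈ Finset.Ico (k + 1) (n + 1), ∀ q ∈ Finset.Ico (k + 1) (n + 1),
      p ≤ q → h p q = 0 := by
    intro p hp q hq hpq
    rw [Finset.mem_Ico] at hp hq
    rcases eq_or_lt_of_le hpq with rfl | hlt
    · by_cases hpm : p ≤ m
      · exact zdiag1 p (Finset.mem_Ico.mpr ⟨hp.1, by omega⟩)
      · exact zdiag2 p (Finset.mem_Ico.mpr ⟨by omega, hp.2⟩)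
    · by_cases hpm : p ≤ m
      · exact zoff1 p (Finset.mem_Ico.mpr ⟨hp.1, by omega⟩)
          q (Finset.mem_Ico.mpr ⟨by omega, hq.2⟩)
      · exact zoff2 p (Finset.mem_Ico.mpr ⟨by omega, hp.2⟩)
          q (Finset.mem_Ico.mpr ⟨by omega, hq.2⟩)
  intro p hp q hq
  rcases le_total p q with hpq | hqp
  · exact main p hp q hq hpq
  · rw [hsym p hp q hq]; exact main q hq p hp hqp
end

section
/- Let $n, m$ be integers with $2 \le m \le n-1$ and $n(m-2) < m^2 - 2$, and let $(h_{pq})_{m+1 \le p,q \le n}$ be real numbers with $h_{pq} = h_{qp}$ for all $p, q$. If $\mathcal{V}_m \le 0$, then $h_{pq} = 0$ for all $m+1 \le p, q \le n$. -/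
/- STATEMENT 7: For `2 ≤ m ≤ n-1` with `n(m-2) < m² - 2` and a symmetric array
`(h_{pq})_{m+1 ≤ p,q ≤ n}` with `𝒱ₘ ≤ 0`, all entries `h_pq` vanish. -/
theorem stmt_7 (n m : ℕ) (hm : 2 ≤ m) (hmn : m + 1 ≤ n)
    (hdim : (n : ℝ) * ((m : ℝ) - 2) < (m : ℝ) ^ 2 - 2)
    (h : ℕ → ℕ → ℝ)
    (hsym : ∀ p ∈ Finset.Icc (m + 1) n, ∀ q ∈ Finset.Icc (m + 1) n, h p q = h q p)
    (hV : (∑ p ∈ Finset.Icc (m + 1) n, ∑ q ∈ Finset.Icc (m + 1) n, (h p q) ^ 2)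
      - (1 / 2 - 1 / (2 * ((m : ℝ) - 1)))
          * (∑ p ∈ Finset.Icc (m + 1) n, h p p) ^ 2 ≤ 0) :
    ∀ p ∈ Finset.Icc (m + 1) n, ∀ q ∈ Finset.Icc (m + 1) n, h p q = 0 := by
  set S := Finset.Icc (m + 1) n with hS
  set T : ℝ := ∑ p ∈ S, ∑ q ∈ S, (h p q) ^ 2 with hT
  set D : ℝ := ∑ p ∈ S, (h p p) ^ 2 with hD
  set H : ℝ := ∑ p ∈ S, h p p with hH
  set c : ℝ := 1 / 2 - 1 / (2 * ((m : ℝ) - 1)) with hc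
  have hm1 : (1 : ℝ) ≤ (m : ℝ) - 1 := by
    have : (2 : ℝ) ≤ (m : ℝ) := by exact_mod_cast hm
    linarith
  have hc0 : 0 ≤ c := by
    rw [hc]
    have h1 : 1 / (2 * ((m : ℝ) - 1)) ≤ 1 / 2 := by
      apply one_div_le_one_div_of_le <;> linarith
    linarith
  have hcard : (S.card : ℝ) = (n : ℝ) - (m : ℝ) := by
    rw [hS, Nat.card_Icc]
    have : n + 1 - (m + 1) = n - m := by omega
    rw [this, Nat.cast_sub (by omega)]
  have hCS : H ^ 2 ≤ (S.card : ℝ) * D := sq_sum_le_card_mul_sum_sq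
  have hDT : D ≤ T := by
    apply Finset.sum_le_sum
    intro p hp
    exact Finset.single_le_sum (f := fun q => (h p q) ^ 2) (fun q _ => sq_nonneg _) hp
  have hT0 : 0 ≤ T := Finset.sum_nonneg fun p _ =>
    Finset.sum_nonneg fun q _ => sq_nonneg _
  have hck : c * (S.card : ℝ) < 1 := by
    rw [hc, hcard]
    have hm1' : (0 : ℝ) < (m : ℝ) - 1 := by linarith
    rw [div_sub_div _ _ (two_ne_zero) (by positivity), div_mul_eq_mul_div,
      div_lt_one (by positivity)]
    nlinarith
  -- T ≤ c * H^2 ≤ c * card * D ≤ c * card * T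
  have key : T ≤ c * (S.card : ℝ) * T := by
    have h1 : T ≤ c * H ^ 2 := by linarith
    have h2 : c * H ^ 2 ≤ c * ((S.card : ℝ) * D) := by
      exact mul_le_mul_of_nonneg_left hCS hc0
    have h3 : c * ((S.card : ℝ) * D) ≤ c * ((S.card : ℝ) * T) := by
      apply mul_le_mul_of_nonneg_left _ hc0
      exact mul_le_mul_of_nonneg_left hDT (by positivity)
    linarith [h3, h2, h1]
  have hTz : T = 0 := by nlinarith
  intro p hp q hq
  have hrow : ∑ q ∈ S, (h p q) ^ 2 = 0 := by
    have := (Finset.sum_eq_zero_iff_of_nonneg (fun p _ =>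
      Finset.sum_nonneg fun q _ => sq_nonneg (h p q))).mp hTz p hp
    exact this
  have := (Finset.sum_eq_zero_iff_of_nonneg (fun q _ => sq_nonneg (h p q))).mp hrow q hq
  exact pow_eq_zero_iff (by norm_num) |>.mp this
end

section
/- Let $n, m$ be integers with $m \ge 2$, $n > m$, $n(m-2) < m^2 - 2$, and $n(m-1) < m(m+1)$, let $\delta > 0$ be a real number, and let $(h_{pq})_{m+1 \le p,q \le n}$ be real numbers with $h_{pq} = h_{qp}$ for all $p, q$. Set $|h|^2 = \sum_{p=m+1}^{n}\sum_{q=m+1}^{n} h_{pq}^2$ and $H = \sum_{p=m+1}^{n} h_{pp}$. Then $\hat{\mathcal{V}}_m := |h|^2 - H^2 + \delta H + \frac{m}{2(m-1)} (H - \delta)^2 > 0$. -/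
/- STATEMENT 9: For integers `m ≥ 2`, `n > m` with `n(m-2) < m² - 2` and
`n(m-1) < m(m+1)`, a real `δ > 0`, and a symmetric array `(h_{pq})_{m+1 ≤ p,q ≤ n}`
with `|h|² = ∑∑ h_pq²`, `H = ∑ h_pp`, one has
`𝒱̂ₘ = |h|² - H² + δH + m/(2(m-1)) (H-δ)² > 0`. -/
theorem stmt_9 (n m : ℕ) (hm : 2 ≤ m) (hnm : m < n)
    (hdim1 : (n : ℝ) * ((m : ℝ) - 2) < (m : ℝ) ^ 2 - 2)
    (hdim2 : (n : ℝ) * ((m : ℝ) - 1) < (m : ℝ) * ((m : ℝ) + 1))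
    (δ : ℝ) (hδ : 0 < δ)
    (h : ℕ → ℕ → ℝ)
    (hsym : ∀ p ∈ Finset.Icc (m + 1) n, ∀ q ∈ Finset.Icc (m + 1) n, h p q = h q p) :
    (∑ p ∈ Finset.Icc (m + 1) n, ∑ q ∈ Finset.Icc (m + 1) n, (h p q) ^ 2)
      - (∑ p ∈ Finset.Icc (m + 1) n, h p p) ^ 2
      + δ * (∑ p ∈ Finset.Icc (m + 1) n, h p p)
      + (m : ℝ) / (2 * ((m : ℝ) - 1))
          * ((∑ p ∈ Finset.Icc (m + 1) n, h p p) - δ) ^ 2 > 0 := by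
  set s := Finset.Icc (m + 1) n with hs
  set S : ℝ := ∑ p ∈ s, ∑ q ∈ s, (h p q) ^ 2 with hS
  set H : ℝ := ∑ p ∈ s, h p p with hH
  -- cardinality
  have hcard : (s.card : ℝ) = (n : ℝ) - (m : ℝ) := by
    rw [hs, Nat.card_Icc]
    have : n + 1 - (m + 1) = n - m := by omega
    rw [this, Nat.cast_sub (le_of_lt hnm)]
  -- diagonal sum ≤ full sum
  have hdiag : (∑ p ∈ s, (h p p) ^ 2) ≤ S := by
    apply Finset.sum_le_sum
    intro p hp
    exact Finset.single_le_sum (fun q _ => sq_nonneg (h p q)) hp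
  -- Cauchy–Schwarz
  have hcs : H ^ 2 ≤ (s.card : ℝ) * ∑ p ∈ s, (h p p) ^ 2 := by
    simpa using sq_sum_le_card_mul_sum_sq (s := s) (f := fun p => h p p)
  set K : ℝ := (n : ℝ) - (m : ℝ) with hK
  have hK1 : (1 : ℝ) ≤ K := by
    have : (m : ℝ) + 1 ≤ (n : ℝ) := by exact_mod_cast hnm
    linarith
  have hkey : H ^ 2 ≤ K * S := by
    calc H ^ 2 ≤ (s.card : ℝ) * ∑ p ∈ s, (h p p) ^ 2 := hcs
    _ ≤ K * S := by
      rw [hcard]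
      apply mul_le_mul_of_nonneg_left hdiag (by linarith)
  have hM1 : (1 : ℝ) ≤ (m : ℝ) - 1 := by
    have : (2 : ℝ) ≤ (m : ℝ) := by exact_mod_cast hm
    linarith
  have ha : K * ((m : ℝ) - 2) < 2 * ((m : ℝ) - 1) := by nlinarith [hdim1]
  have hb : K * ((m : ℝ) - 1) < 2 * (m : ℝ) := by nlinarith [hdim2]
  have hMpos : (0 : ℝ) < 2 * ((m : ℝ) - 1) := by linarith
  rw [gt_iff_lt, ← mul_pos_iff_of_pos_left hMpos]
  have heq : 2 * ((m : ℝ) - 1) * (S - H ^ 2 + δ * H + (m : ℝ) / (2 * ((m : ℝ) - 1)) * (H - δ) ^ 2)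
      = 2 * ((m : ℝ) - 1) * (S - H ^ 2 + δ * H) + (m : ℝ) * (H - δ) ^ 2 := by
    field_simp
  rw [heq]
  have hApos : (0 : ℝ) < 2 * ((m : ℝ) - 1) - K * ((m : ℝ) - 2) := by linarith
  have hKpos : (0 : ℝ) < K := by linarith
  have hMpos' : (0 : ℝ) < (m : ℝ) - 1 := by linarith
  have h2m : (0 : ℝ) < 2 * (m : ℝ) - K * ((m : ℝ) - 1) := by linarith
  nlinarith [mul_pos hApos hKpos,
    sq_nonneg ((2 * ((m : ℝ) - 1) - K * ((m : ℝ) - 2)) * H - δ * K),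
    mul_nonneg (le_of_lt hApos) (sub_nonneg.mpr hkey),
    mul_pos (mul_pos (mul_pos hδ hδ) (mul_pos hKpos hMpos')) h2m]
end
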